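/- arXiv:q-alg/9708026 — 2 statements merged into one kernel-verified Lean document; each statement's English description precedes it below -/
import Mathlib

section
/- Let q be a real number with 0 < q < 1, let c₀, d₀ be complex numbers with c₀ d₀ = 1, and let A be an associative unital ℂ-algebra containing an invertible element x and elements y, ŷ satisfying: y x = q² x y; ŷ x = q^{-2} x ŷ; ŷ y = −(q^{-1}x − c₀)(q^{-1}x − d₀); y ŷ = −(q x − c₀)(q x − d₀). Set a = q^{1/2}/(q^{-1} − q), and define E = a·y, F = a·x^{-1}ŷ, K = x, K^{-1} = x^{-1}. Then: K E = q^{-2} E K; K F = q² F K; and E F − F E = (K − K^{-1})/(q^{-1} − q). -/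
/-!
Conjugation by `x` rescales `y` by `q⁻²` and `ŷ` (hence also `x⁻¹ŷ`) by `q²`, which gives the two
`K`-relations. For the commutator, moving `x⁻¹` past `y` turns `EF - FE` into
`a² x⁻¹ (q⁻² yŷ - ŷy)`; expanding the two quadratics of the hyperboloid, the terms in `c₀ + d₀`
cancel and `q⁻² yŷ - ŷy = (q⁻² - 1)(x² - c₀d₀)`. With `c₀d₀ = 1` the commutator is
`a²(q⁻² - 1)(x - x⁻¹)`, and `a²(q⁻² - 1) = (q⁻¹ - q)⁻¹`.
-/

def QCommute {K A : Type*} [CommSemiring K] [Semiring A] [Algebra K A] (t : K) (u v : A) : Prop :=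
  u * v = t • (v * u)

namespace QCommute

section Semiring

variable {K A : Type*} [CommSemiring K] [Semiring A] [Algebra K A] {s t : K} {u v w : A}

theorem of_commute (h : Commute u v) : QCommute (1 : K) u v := by
  rw [QCommute, one_smul, h.eq]

theorem smul_left (h : QCommute t u v) (a : K) : QCommute t (a • u) v := by
  rw [QCommute, smul_mul_assoc, h, mul_smul_comm, smul_comm]

theorem mul_left (hu : QCommute s u w) (hv : QCommute t v w) : QCommute (s * t) (u * v) w := by
  rw [QCommute, mul_assoc, hv, mul_smul_comm, ← mul_assoc, hu, smul_mul_assoc, smul_smul,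
    mul_assoc, mul_comm t]

end Semiring

variable {K A : Type*} [Semifield K] [Semiring A] [Algebra K A] {t : K} {u v v' : A}

theorem symm (h : QCommute t u v) (ht : t ≠ 0) : QCommute t⁻¹ v u := by
  rw [QCommute, h, smul_smul, inv_mul_cancel₀ ht, one_smul]

theorem inv_right (h : QCommute t u v) (ht : t ≠ 0) (hvv' : v * v' = 1) (hv'v : v' * v = 1) :
    QCommute t⁻¹ u v' := by
  refine QCommute.symm ?_ ht
  calc v' * u = v' * (u * v) * v' := by rw [mul_assoc, mul_assoc, hvv', mul_one]
    _ = t • (u * v') := by rw [h, mul_smul_comm, smul_mul_assoc, ← mul_assoc, hv'v, one_mul]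

end QCommute

section Hyperboloid

variable {K A : Type*} [Field K] [Ring A] [Algebra K A]

theorem sub_smul_one_mul_sub_smul_one (s c d : K) (x : A) :
    (s • x - c • (1 : A)) * (s • x - d • 1) =
      s ^ 2 • (x * x) - (s * (c + d)) • x + (c * d) • 1 := by
  simp only [mul_sub, sub_mul, smul_mul_smul_comm, mul_one, one_mul]
  module

theorem inv_sq_smul_mul_sub_mul_of_hyperboloid {q c d : K} (hq : q ≠ 0) {x y yh : A}
    (h3 : yh * y = -((q⁻¹ • x - c • (1 : A)) * (q⁻¹ • x - d • 1)))
    (h4 : y * yh = -((q • x - c • (1 : A)) * (q • x - d • 1))) :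
    (q ^ 2)⁻¹ • (y * yh) - yh * y = ((q ^ 2)⁻¹ - 1) • (x * x - (c * d) • 1) := by
  rw [h3, h4, sub_smul_one_mul_sub_smul_one, sub_smul_one_mul_sub_smul_one]
  match_scalars <;> field_simp <;> ring

-- The degenerate cases `q = 0` and `q⁻¹ = q` hold because `0⁻¹ = 0` and `x / 0 = 0`.
theorem sq_div_mul_inv_sq_sub_one {s q : K} (hs : s ^ 2 = q) :
    (s / (q⁻¹ - q)) ^ 2 * ((q ^ 2)⁻¹ - 1) = (q⁻¹ - q)⁻¹ := by
  rcases eq_or_ne q 0 with rfl | hq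
  · simp
  rcases eq_or_ne (q⁻¹ - q) 0 with hd | hd
  · simp [hd]
  rw [div_pow, hs]
  field_simp

end Hyperboloid

theorem quantum_moment_map_relations_general
    (q : ℝ) (hq0 : 0 < q)
    (c₀ d₀ : ℂ) (hcd : c₀ * d₀ = 1)
    (A : Type*) [Ring A] [Algebra ℂ A]
    (x x' y yh : A)
    (hxx' : x * x' = 1) (hx'x : x' * x = 1)
    (h1 : y * x = ((q : ℂ) ^ 2) • (x * y))
    (h2 : yh * x = ((q : ℂ) ^ 2)⁻¹ • (x * yh))
    (h3 : yh * y = -((((q : ℂ))⁻¹ • x - c₀ • (1 : A)) * (((q : ℂ))⁻¹ • x - d₀ • (1 : A))))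
    (h4 : y * yh = -(((q : ℂ) • x - c₀ • (1 : A)) * ((q : ℂ) • x - d₀ • (1 : A))))
    (a : ℂ) (ha : a = (Real.sqrt q : ℂ) / (((q : ℂ))⁻¹ - (q : ℂ)))
    (E F : A) (hE : E = a • y) (hF : F = a • (x' * yh)) :
    x * E = ((q : ℂ) ^ (-2 : ℤ)) • (E * x) ∧
    x * F = ((q : ℂ) ^ 2) • (F * x) ∧
    E * F - F * E = (((q : ℂ))⁻¹ - (q : ℂ))⁻¹ • (x - x') := by
  have hq : ((q : ℂ) ^ 2) ≠ 0 := pow_ne_zero 2 (Complex.ofReal_ne_zero.mpr hq0.ne')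
  have hy : QCommute ((q : ℂ) ^ 2) y x := h1
  have hx' : QCommute (1 : ℂ) x' x := .of_commute (hx'x.trans hxx'.symm)
  have hyx' : y * x' = ((q : ℂ) ^ 2)⁻¹ • (x' * y) := hy.inv_right hq hxx' hx'x
  refine ⟨?_, ?_, ?_⟩
  · rw [zpow_neg, zpow_ofNat, hE]
    exact (hy.smul_left a).symm hq
  · have hF' := ((hx'.mul_left (h2 : QCommute _ yh x)).smul_left a).symm (by simpa using hq)
    rwa [one_mul, inv_inv, ← hF] at hF'
  · have hsqrt : ((Real.sqrt q : ℂ)) ^ 2 = q := by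
      exact_mod_cast Real.sq_sqrt hq0.le
    calc E * F - F * E = a ^ 2 • (x' * (((q : ℂ) ^ 2)⁻¹ • (y * yh) - yh * y)) := by
          rw [hE, hF, smul_mul_smul_comm, smul_mul_smul_comm, ← mul_assoc y, hyx', mul_sub,
            mul_smul_comm, smul_mul_assoc, mul_assoc, mul_assoc x', ← smul_sub, ← sq a]
      _ = (a ^ 2 * (((q : ℂ) ^ 2)⁻¹ - 1)) • (x - x') := by
          rw [inv_sq_smul_mul_sub_mul_of_hyperboloid (by simpa using hq) h3 h4, hcd, one_smul,
            mul_smul_comm, mul_sub, ← mul_assoc, hx'x, one_mul, mul_one, smul_smul]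
      _ = _ := by rw [ha, sq_div_mul_inv_sq_sub_one hsqrt]

/-- the quantum moment map. In the quantum algebra of functions on
the quantum hyperboloid `X_{c₀,d₀}` (with `c₀d₀ = 1`), the elements
`E = a•y`, `F = a•(x⁻¹ŷ)`, `K = x`, `K⁻¹ = x⁻¹` with `a = q^{1/2}/(q⁻¹ − q)`
satisfy the defining relations of `U_q(sl(2))`. -/
theorem quantum_moment_map_relations
    (q : ℝ) (hq0 : 0 < q) (hq1 : q < 1)
    (c₀ d₀ : ℂ) (hcd : c₀ * d₀ = 1)
    (A : Type*) [Ring A] [Algebra ℂ A]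
    (x x' y yh : A)
    (hxx' : x * x' = 1) (hx'x : x' * x = 1)
    (h1 : y * x = ((q : ℂ) ^ 2) • (x * y))
    (h2 : yh * x = ((q : ℂ) ^ 2)⁻¹ • (x * yh))
    (h3 : yh * y = -((((q : ℂ))⁻¹ • x - c₀ • (1 : A)) * (((q : ℂ))⁻¹ • x - d₀ • (1 : A))))
    (h4 : y * yh = -(((q : ℂ) • x - c₀ • (1 : A)) * ((q : ℂ) • x - d₀ • (1 : A))))
    (a : ℂ) (ha : a = (Real.sqrt q : ℂ) / (((q : ℂ))⁻¹ - (q : ℂ)))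
    (E F : A) (hE : E = a • y) (hF : F = a • (x' * yh)) :
    x * E = ((q : ℂ) ^ (-2 : ℤ)) • (E * x) ∧
    x * F = ((q : ℂ) ^ 2) • (F * x) ∧
    E * F - F * E = (((q : ℂ))⁻¹ - (q : ℂ))⁻¹ • (x - x') :=
  quantum_moment_map_relations_general q hq0 c₀ d₀ hcd A x x' y yh hxx' hx'x h1 h2 h3 h4 a ha E F hE
    hF
end

section
/- Let q be a real number with 0 < q < 1, let c₀, d₀ be real numbers with 0 < c₀ ≤ d₀ and c₀ d₀ = 1, and suppose ν₀ is a nonzero real number such that ν₀ q^{-2 m₀} = q c₀ for some m₀ ∈ ℤ. On the ℂ-vector space of Laurent polynomials in ζ over ℂ, define X(ζ^k) = ν₀ q^{-2k} ζ^k, Z = multiplication by ζ, Y = Z∘(q^{-1}X − c₀·id), and Ŷ = −Z^{-1}∘(qX − d₀·id) where Z^{-1} is multiplication by ζ^{-1}. Then: (1) the subspace W spanned by {ζ^k : k ≤ m₀} is invariant under X, Y and Ŷ; (2) the eigenvalues of X on W are exactly {c₀ q^{2m+1} : m ∈ ℕ}; (3) there exists a positive-definite Hermitian inner product ⟨·,·⟩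 on W satisfying ⟨X f, g⟩ = ⟨f, X g⟩ and ⟨Y f, g⟩ = −⟨f, Ŷ g⟩ for all f, g ∈ W. -/
/-!
In the monomial basis `X` is diagonal, with eigenvalue `q ρₖ` on `ζᵏ` where
`ρₖ = c₀ q^(2(m₀ - k))`, while `Y` raises the degree with coefficient `ρₖ₋₁ - c₀` and `Ŷ` lowers
it with coefficient `d₀ - q² ρₖ₊₁ = d₀ - ρₖ`. The coefficient of `Y` vanishes at `k = m₀`, which
cuts the progression off at `ζ^m₀`. A diagonal inner product `⟨ζʲ, ζᵏ⟩ = δⱼₖ wₖ` makes `X`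
symmetric, and `⟨Y f, g⟩ = -⟨f, Ŷ g⟩` becomes the two-term recursion
`wₖ₊₁ (ρₖ - c₀) = -wₖ (d₀ - ρₖ)`; since `ρₖ < c₀ ≤ d₀` for `k < m₀`, it has a positive solution.
-/

open LaurentPolynomial ComplexConjugate

namespace LaurentPolynomial

section Monomials

variable {R : Type*} [CommSemiring R]

open AddMonoidAlgebra

theorem coeff_T_mul (n : ℤ) (f : R[T;T⁻¹]) (k : ℤ) : (T n * f).coeff k = f.coeff (k - n) := by
  rw [T, coeff_single_mul_apply, one_mul, neg_add_eq_sub]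

theorem coeff_apply_of_apply_T {X : R[T;T⁻¹] →ₗ[R] R[T;T⁻¹]} {ev : ℤ → R}
    (hX : ∀ k, X (T k) = ev k • T k) (f : R[T;T⁻¹]) (k : ℤ) :
    (X f).coeff k = ev k * f.coeff k := by
  induction f using induction_linear with
  | zero => simp
  | add f g hf hg => simp [coeff_add, hf, hg, mul_add]
  | single a r =>
    rw [← mul_one r, ← smul_single', ← T, map_smul, hX]
    by_cases h : a = k
    · subst h
      simp only [coeff_smul_apply, T_apply, ↓reduceIte, smul_eq_mul, mul_one]
      ring
    · simp [coeff_smul, h]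

theorem span_T_le_eq_supported (m : ℤ) :
    Submodule.span R {f : R[T;T⁻¹] | ∃ k, k ≤ m ∧ f = T k} =
      supported R R (Set.Iic m) := by
  rw [supported_eq_span_single]
  congr 1
  ext f
  simp only [Set.mem_image, Set.mem_Iic, T, eq_comm]
  rfl

theorem mem_supported_of_coeff_eq_mul {s : Set ℤ} {f g : R[T;T⁻¹]} {ev : ℤ → R}
    (hg : ∀ k, g.coeff k = ev k * f.coeff k) (hf : f ∈ supported R R s) :
    g ∈ supported R R s := by
  rw [mem_supported'] at hf ⊢
  intro k hk
  rw [hg, hf k hk, mul_zero]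

theorem mem_supported_Iic_of_coeff_eq_mul_sub_one {m : ℤ} {f g : R[T;T⁻¹]} {a : ℤ → R}
    (hg : ∀ k, g.coeff k = a (k - 1) * f.coeff (k - 1)) (ha : a m = 0)
    (hf : f ∈ supported R R (Set.Iic m)) : g ∈ supported R R (Set.Iic m) := by
  rw [mem_supported'] at hf ⊢
  intro k hk
  rw [hg]
  rcases eq_or_ne (k - 1) m with h | h
  · rw [h, ha, zero_mul]
  · rw [hf (k - 1) (by simp only [Set.mem_Iic] at hk ⊢; omega), mul_zero]

theorem mem_supported_Iic_of_coeff_eq_mul_add_one {m : ℤ} {f g : R[T;T⁻¹]} {b : ℤ → R}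
    (hg : ∀ k, g.coeff k = b k * f.coeff (k + 1))
    (hf : f ∈ supported R R (Set.Iic m)) : g ∈ supported R R (Set.Iic m) := by
  rw [mem_supported'] at hf ⊢
  intro k hk
  rw [hg, hf (k + 1) (by simp only [Set.mem_Iic] at hk ⊢; omega), mul_zero]

theorem setOf_eigenvalue_supported_eq_image {R : Type*} [CommRing R] [IsDomain R]
    {X : R[T;T⁻¹] →ₗ[R] R[T;T⁻¹]} {ev : ℤ → R} (hX : ∀ k, X (T k) = ev k • T k) (s : Set ℤ) :
    {μ : R | ∃ f ∈ supported R R s, f ≠ 0 ∧ X f = μ • f} = ev '' s := by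
  ext μ
  constructor
  · rintro ⟨f, hfs, hf0, hXf⟩
    obtain ⟨k, hk⟩ : ∃ k, f.coeff k ≠ 0 := by
      by_contra! h
      exact hf0 (coeff_eq_zero.mp (Finsupp.ext h))
    have hks : k ∈ s := by_contra fun h => hk (mem_supported'.mp hfs k h)
    have hcoeff : ev k * f.coeff k = μ * f.coeff k := by
      rw [← coeff_apply_of_apply_T hX, hXf, coeff_smul_apply, smul_eq_mul]
    exact ⟨k, hks, mul_right_cancel₀ hk hcoeff⟩
  · rintro ⟨k, hks, rfl⟩
    refine ⟨T k, ?_, (isUnit_T k).ne_zero, hX k⟩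
    rw [mem_supported']
    intro j hj
    rw [T_apply, if_neg (by rintro rfl; exact hj hks)]

end Monomials

section WeightedInner

variable (w : ℤ → ℝ)

noncomputable def weightedInner (f g : ℂ[T;T⁻¹]) : ℂ :=
  ∑ k ∈ f.coeff.support ∪ g.coeff.support, (w k : ℂ) * f.coeff k * conj (g.coeff k)

variable {w}

theorem weightedInner_eq_sum_of_subset {f g : ℂ[T;T⁻¹]} {s : Finset ℤ}
    (hs : f.coeff.support ∩ g.coeff.support ⊆ s) :
    weightedInner w f g = ∑ k ∈ s, (w k : ℂ) * f.coeff k * conj (g.coeff k) := by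
  have hvanish : ∀ k ∉ f.coeff.support ∩ g.coeff.support,
      (w k : ℂ) * f.coeff k * conj (g.coeff k) = 0 := by
    intro k hk
    rcases not_and_or.mp (Finset.mem_inter.not.mp hk) with hk | hk <;>
      simp [Finsupp.notMem_support_iff.mp hk]
  rw [weightedInner, ← Finset.sum_subset Finset.inter_subset_union fun k _ => hvanish k,
    Finset.sum_subset hs fun k _ => hvanish k]

theorem weightedInner_conj_symm (f g : ℂ[T;T⁻¹]) :
    conj (weightedInner w g f) = weightedInner w f g := by
  rw [weightedInner, weightedInner, Finset.union_comm, map_sum]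
  refine Finset.sum_congr rfl fun k _ => ?_
  simp only [map_mul, Complex.conj_conj, Complex.conj_ofReal]
  ring

theorem weightedInner_smul_left (a : ℂ) (f g : ℂ[T;T⁻¹]) :
    weightedInner w (a • f) g = a * weightedInner w f g := by
  rw [weightedInner_eq_sum_of_subset (s := f.coeff.support ∪ g.coeff.support), weightedInner,
    Finset.mul_sum]
  · refine Finset.sum_congr rfl fun k _ => ?_
    rw [AddMonoidAlgebra.coeff_smul_apply, smul_eq_mul]
    ring
  · exact fun k hk => Finset.mem_union_left _
      (Finsupp.support_smul (Finset.mem_inter.mp hk).1)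

theorem weightedInner_add_left (f₁ f₂ g : ℂ[T;T⁻¹]) :
    weightedInner w (f₁ + f₂) g = weightedInner w f₁ g + weightedInner w f₂ g := by
  set s := f₁.coeff.support ∪ f₂.coeff.support ∪ g.coeff.support
  rw [weightedInner_eq_sum_of_subset (s := s), weightedInner_eq_sum_of_subset (s := s),
    weightedInner_eq_sum_of_subset (s := s), ← Finset.sum_add_distrib]
  · refine Finset.sum_congr rfl fun k _ => ?_
    rw [AddMonoidAlgebra.coeff_add, Finsupp.add_apply]
    ring
  all_goals intro k hk; simp only [s, Finset.mem_union, Finset.mem_inter] at hk ⊢; tauto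

theorem weightedInner_self_re_pos (hw : ∀ k, 0 < w k) {f : ℂ[T;T⁻¹]} (hf : f ≠ 0) :
    0 < (weightedInner w f f).re := by
  rw [weightedInner, Finset.union_self, Complex.re_sum]
  refine Finset.sum_pos (fun k hk => ?_)
    (Finsupp.support_nonempty_iff.mpr (AddMonoidAlgebra.coeff_eq_zero.not.mpr hf))
  rw [mul_assoc, Complex.mul_conj, ← Complex.ofReal_mul, Complex.ofReal_re]
  exact mul_pos (hw k) (Complex.normSq_pos.mpr (Finsupp.mem_support_iff.mp hk))

theorem weightedInner_diagonal_symm {f g Xf Xg : ℂ[T;T⁻¹]} {ev : ℤ → ℝ}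
    (hXf : ∀ k, Xf.coeff k = ev k * f.coeff k) (hXg : ∀ k, Xg.coeff k = ev k * g.coeff k) :
    weightedInner w Xf g = weightedInner w f Xg := by
  set s := f.coeff.support ∪ g.coeff.support
  rw [weightedInner_eq_sum_of_subset (s := s), weightedInner_eq_sum_of_subset (s := s)]
  · refine Finset.sum_congr rfl fun k _ => ?_
    rw [hXf, hXg, map_mul, Complex.conj_ofReal]
    ring
  · exact fun k hk => Finset.mem_union_left _ (Finset.mem_inter.mp hk).1
  · exact fun k hk => Finset.mem_union_right _ (Finset.mem_inter.mp hk).2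

theorem weightedInner_shift_adjoint {m : ℤ} {a b : ℤ → ℝ}
    (hw : ∀ j < m, w (j + 1) * a j = -(w j * b j))
    {f g Af Bg : ℂ[T;T⁻¹]} (hg : g ∈ AddMonoidAlgebra.supported ℂ ℂ (Set.Iic m))
    (hAf : ∀ k, Af.coeff k = a (k - 1) * f.coeff (k - 1))
    (hBg : ∀ k, Bg.coeff k = b k * g.coeff (k + 1)) :
    weightedInner w Af g = -weightedInner w f Bg := by
  have hterm : ∀ j, (w (j + 1) : ℂ) * Af.coeff (j + 1) * conj (g.coeff (j + 1)) =
      -((w j : ℂ) * f.coeff j * conj (Bg.coeff j)) := by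
    intro j
    rw [hAf, hBg, add_sub_cancel_right, map_mul, Complex.conj_ofReal]
    by_cases hj : j < m
    · have hwC : (w (j + 1) : ℂ) * a j = -(w j * b j) := by exact_mod_cast hw j hj
      linear_combination (f.coeff j * conj (g.coeff (j + 1))) * hwC
    · rw [AddMonoidAlgebra.mem_supported'.mp hg (j + 1) (by simp only [Set.mem_Iic]; omega)]
      simp
  rw [weightedInner_eq_sum_of_subset (s := f.coeff.support.image (· + 1)),
    weightedInner_eq_sum_of_subset (s := f.coeff.support),
    Finset.sum_image (fun _ _ _ _ h => add_right_cancel h), ← Finset.sum_neg_distrib]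
  · exact Finset.sum_congr rfl fun j _ => hterm j
  · exact fun k hk => (Finset.mem_inter.mp hk).1
  · intro k hk
    have hk' : Af.coeff k ≠ 0 := Finsupp.mem_support_iff.mp (Finset.mem_inter.mp hk).1
    rw [hAf] at hk'
    exact Finset.mem_image.mpr
      ⟨k - 1, Finsupp.mem_support_iff.mpr (right_ne_zero_of_mul hk'), sub_add_cancel k 1⟩

end WeightedInner

end LaurentPolynomial

theorem mul_zpow_neg_two_mul_eq {K : Type*} [Field K] {q ν c : K} (hq : q ≠ 0) {m : ℤ}
    (hm : ν * q ^ (-(2 * m)) = q * c) (k : ℤ) :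
    ν * q ^ (-(2 * k)) = q * (c * q ^ (2 * (m - k))) := by
  rw [← mul_assoc, ← hm, mul_assoc, ← zpow_add₀ hq]
  ring_nf

/-- The squared norm of `ζ ^ (m₀ - n)` in the discrete series inner product. -/
noncomputable def discreteSeriesWeight (q c₀ d₀ : ℝ) : ℕ → ℝ
  | 0 => 1
  | n + 1 => discreteSeriesWeight q c₀ d₀ n * (c₀ - c₀ * q ^ (2 * (n + 1))) /
      (d₀ - c₀ * q ^ (2 * (n + 1)))

section DiscreteSeriesWeight

variable {q c₀ d₀ : ℝ}

theorem discreteSeriesWeight_pos (hq0 : 0 < q) (hq1 : q < 1) (hc : 0 < c₀) (hcd : c₀ ≤ d₀)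
    (n : ℕ) : 0 < discreteSeriesWeight q c₀ d₀ n := by
  induction n with
  | zero => exact one_pos
  | succ n ih =>
    have h : c₀ * q ^ (2 * (n + 1)) < c₀ :=
      mul_lt_of_lt_one_right hc (pow_lt_one₀ hq0.le hq1 (by omega))
    exact div_pos (mul_pos ih (sub_pos.mpr h)) (sub_pos.mpr (h.trans_le hcd))

theorem discreteSeriesWeight_succ_mul (hq0 : 0 < q) (hq1 : q < 1) (hc : 0 < c₀)
    (hcd : c₀ ≤ d₀) (n : ℕ) :
    discreteSeriesWeight q c₀ d₀ (n + 1) * (d₀ - c₀ * q ^ (2 * (n + 1))) =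
      discreteSeriesWeight q c₀ d₀ n * (c₀ - c₀ * q ^ (2 * (n + 1))) := by
  have h : c₀ * q ^ (2 * (n + 1)) < c₀ :=
    mul_lt_of_lt_one_right hc (pow_lt_one₀ hq0.le hq1 (by omega))
  exact div_mul_cancel₀ _ (sub_pos.mpr (h.trans_le hcd)).ne'

theorem discreteSeriesWeight_toNat_mul (hq0 : 0 < q) (hq1 : q < 1) (hc : 0 < c₀)
    (hcd : c₀ ≤ d₀) {m j : ℤ} (hj : j < m) :
    discreteSeriesWeight q c₀ d₀ (m - (j + 1)).toNat * (c₀ * q ^ (2 * (m - j)) - c₀) =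
      -(discreteSeriesWeight q c₀ d₀ (m - j).toNat *
        (d₀ - q ^ 2 * (c₀ * q ^ (2 * (m - (j + 1)))))) := by
  obtain ⟨n, rfl⟩ : ∃ n : ℕ, j = m - (n + 1 : ℕ) := ⟨(m - j - 1).toNat, by omega⟩
  have hj1 : m - (n + 1 : ℕ) + 1 = m - n := by push_cast; ring
  simp only [hj1, sub_sub_cancel, Int.toNat_natCast]
  norm_cast
  linear_combination discreteSeriesWeight_succ_mul hq0 hq1 hc hcd n

end DiscreteSeriesWeight

theorem image_Iic_mul_zpow_eq (q c₀ : ℝ) (m : ℤ) :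
    (fun k : ℤ => ((q * (c₀ * q ^ (2 * (m - k))) : ℝ) : ℂ)) '' Set.Iic m =
      {μ : ℂ | ∃ n : ℕ, μ = ((c₀ * q ^ (2 * n + 1) : ℝ) : ℂ)} := by
  have hnat (n : ℕ) : q * (c₀ * q ^ (2 * (m - (m - n)))) = c₀ * q ^ (2 * n + 1) := by
    rw [sub_sub_cancel, ← Nat.cast_ofNat, ← Nat.cast_mul, zpow_natCast]
    ring
  ext μ
  constructor
  · rintro ⟨k, hk, rfl⟩
    obtain ⟨n, rfl⟩ : ∃ n : ℕ, k = m - n := ⟨(m - k).toNat, by rw [Set.mem_Iic] at hk; omega⟩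
    exact ⟨n, congrArg Complex.ofReal (hnat n)⟩
  · rintro ⟨n, rfl⟩
    exact ⟨m - n, by simp, congrArg Complex.ofReal (hnat n)⟩

theorem coeff_raising_apply {ρ : ℤ → ℝ} {q : ℝ} (hq : q ≠ 0) (c₀ : ℝ)
    {X Z : ℂ[T;T⁻¹] →ₗ[ℂ] ℂ[T;T⁻¹]} (hX : ∀ f k, (X f).coeff k = ((q * ρ k : ℝ) : ℂ) * f.coeff k)
    (hZ : ∀ f, Z f = T 1 * f) (f : ℂ[T;T⁻¹]) (k : ℤ) :
    ((Z ∘ₗ ((q : ℂ)⁻¹ • X - (c₀ : ℂ) • LinearMap.id)) f).coeff k =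
      ((ρ (k - 1) - c₀ : ℝ) : ℂ) * f.coeff (k - 1) := by
  rw [LinearMap.comp_apply, hZ, coeff_T_mul, LinearMap.sub_apply, LinearMap.smul_apply,
    LinearMap.smul_apply, LinearMap.id_apply, AddMonoidAlgebra.coeff_sub, Finsupp.sub_apply,
    AddMonoidAlgebra.coeff_smul_apply, AddMonoidAlgebra.coeff_smul_apply, hX, smul_eq_mul,
    smul_eq_mul]
  push_cast
  rw [mul_assoc, inv_mul_cancel_left₀ (Complex.ofReal_ne_zero.mpr hq)]
  ring

theorem coeff_lowering_apply {ρ : ℤ → ℝ} {q : ℝ} (d₀ : ℝ)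
    {X Z' : ℂ[T;T⁻¹] →ₗ[ℂ] ℂ[T;T⁻¹]} (hX : ∀ f k, (X f).coeff k = ((q * ρ k : ℝ) : ℂ) * f.coeff k)
    (hZ' : ∀ f, Z' f = T (-1) * f) (f : ℂ[T;T⁻¹]) (k : ℤ) :
    ((-(Z' ∘ₗ ((q : ℂ) • X - (d₀ : ℂ) • LinearMap.id))) f).coeff k =
      ((d₀ - q ^ 2 * ρ (k + 1) : ℝ) : ℂ) * f.coeff (k + 1) := by
  rw [LinearMap.neg_apply, LinearMap.comp_apply, hZ', AddMonoidAlgebra.coeff_neg,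
    Finsupp.neg_apply, coeff_T_mul, LinearMap.sub_apply, LinearMap.smul_apply,
    LinearMap.smul_apply, LinearMap.id_apply, AddMonoidAlgebra.coeff_sub, Finsupp.sub_apply,
    AddMonoidAlgebra.coeff_smul_apply, AddMonoidAlgebra.coeff_smul_apply, hX, smul_eq_mul,
    smul_eq_mul, sub_neg_eq_add]
  push_cast
  ring

theorem quantum_hyperboloid_discrete_series_general
    (q : ℝ) (hq0 : 0 < q) (hq1 : q < 1)
    (c₀ d₀ : ℝ) (hc : 0 < c₀) (hcd : c₀ ≤ d₀)
    (ν₀ : ℝ) (m₀ : ℤ) (hm : ν₀ * q ^ (-(2 * m₀)) = q * c₀)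
    (X Z Z' Y Yh : LaurentPolynomial ℂ →ₗ[ℂ] LaurentPolynomial ℂ)
    (hX : ∀ k : ℤ, X (T k) = ((ν₀ : ℂ) * (q : ℂ) ^ (-(2 * k))) • T k)
    (hZ : ∀ f : LaurentPolynomial ℂ, Z f = T 1 * f)
    (hZ' : ∀ f : LaurentPolynomial ℂ, Z' f = T (-1) * f)
    (hY : Y = Z ∘ₗ (((q : ℂ))⁻¹ • X - (c₀ : ℂ) • LinearMap.id))
    (hYh : Yh = -(Z' ∘ₗ ((q : ℂ) • X - (d₀ : ℂ) • LinearMap.id)))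
    (W : Submodule ℂ (LaurentPolynomial ℂ))
    (hW : W = Submodule.span ℂ {f : LaurentPolynomial ℂ | ∃ k : ℤ, k ≤ m₀ ∧ f = T k}) :
    ((∀ f ∈ W, X f ∈ W) ∧ (∀ f ∈ W, Y f ∈ W) ∧ (∀ f ∈ W, Yh f ∈ W)) ∧
    ({μ : ℂ | ∃ f ∈ W, f ≠ 0 ∧ X f = μ • f} =
      {μ : ℂ | ∃ m : ℕ, μ = ((c₀ * q ^ (2 * m + 1) : ℝ) : ℂ)}) ∧
    (∃ inner : LaurentPolynomial ℂ → LaurentPolynomial ℂ → ℂ,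
      (∀ f ∈ W, ∀ g ∈ W, inner f g = starRingEnd ℂ (inner g f)) ∧
      (∀ (a : ℂ), ∀ f ∈ W, ∀ g ∈ W, inner (a • f) g = a * inner f g) ∧
      (∀ f₁ ∈ W, ∀ f₂ ∈ W, ∀ g ∈ W, inner (f₁ + f₂) g = inner f₁ g + inner f₂ g) ∧
      (∀ f ∈ W, f ≠ 0 → 0 < (inner f f).re) ∧
      (∀ f ∈ W, ∀ g ∈ W, inner (X f) g = inner f (X g)) ∧
      (∀ f ∈ W, ∀ g ∈ W, inner (Y f) g = -inner f (Yh g))) := by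
  have hq : q ≠ 0 := hq0.ne'
  set ρ : ℤ → ℝ := fun k => c₀ * q ^ (2 * (m₀ - k))
  have hev (k : ℤ) : X (T k) = ((q * ρ k : ℝ) : ℂ) • T k := by
    rw [hX, ← mul_zpow_neg_two_mul_eq hq hm k]
    push_cast
    rfl
  have hXc := coeff_apply_of_apply_T hev
  have hYc := hY ▸ coeff_raising_apply hq c₀ hXc hZ
  have hYhc := hYh ▸ coeff_lowering_apply d₀ hXc hZ'
  rw [span_T_le_eq_supported] at hW
  subst hW
  refine ⟨⟨fun f => mem_supported_of_coeff_eq_mul (hXc f),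
    fun f => mem_supported_Iic_of_coeff_eq_mul_sub_one (a := fun j => ((ρ j - c₀ : ℝ) : ℂ))
      (hYc f) (by simp [ρ]),
    fun f => mem_supported_Iic_of_coeff_eq_mul_add_one (hYhc f)⟩,
    by rw [setOf_eigenvalue_supported_eq_image hev, image_Iic_mul_zpow_eq],
    weightedInner fun k => discreteSeriesWeight q c₀ d₀ (m₀ - k).toNat,
    fun f _ g _ => (weightedInner_conj_symm f g).symm,
    fun a f _ g _ => weightedInner_smul_left a f g,
    fun f₁ _ f₂ _ g _ => weightedInner_add_left f₁ f₂ g,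
    fun f _ hf => weightedInner_self_re_pos (fun k => discreteSeriesWeight_pos hq0 hq1 hc hcd _) hf,
    fun f _ g _ => weightedInner_diagonal_symm (hXc f) (hXc g),
    fun f _ g hg => weightedInner_shift_adjoint (a := fun j => ρ j - c₀)
      (b := fun j => d₀ - q ^ 2 * ρ (j + 1))
      (fun j hj => discreteSeriesWeight_toNat_mul hq0 hq1 hc hcd hj) hg (hYc f) (hYhc g)⟩

/-- when `qc₀` belongs to the progression `{ν₀q^{-2k}}` (say
`ν₀q^{-2m₀} = qc₀`), the subspace `W` spanned by the monomials `ζ^k` with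
`k ≤ m₀` is invariant under `X`, `Y`, `Ŷ`; the eigenvalues of `X` on `W` are
exactly `{c₀q^{2m+1} : m ∈ ℕ}`; and `W` carries a positive-definite Hermitian
inner product for which `X` is symmetric and `−Ŷ` is adjoint to `Y` (the
holomorphic discrete series). -/
theorem quantum_hyperboloid_discrete_series
    (q : ℝ) (hq0 : 0 < q) (hq1 : q < 1)
    (c₀ d₀ : ℝ) (hc : 0 < c₀) (hcd : c₀ ≤ d₀) (hcd1 : c₀ * d₀ = 1)
    (ν₀ : ℝ) (hν : ν₀ ≠ 0) (m₀ : ℤ) (hm : ν₀ * q ^ (-(2 * m₀)) = q * c₀)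
    (X Z Z' Y Yh : LaurentPolynomial ℂ →ₗ[ℂ] LaurentPolynomial ℂ)
    (hX : ∀ k : ℤ, X (T k) = ((ν₀ : ℂ) * (q : ℂ) ^ (-(2 * k))) • T k)
    (hZ : ∀ f : LaurentPolynomial ℂ, Z f = T 1 * f)
    (hZ' : ∀ f : LaurentPolynomial ℂ, Z' f = T (-1) * f)
    (hY : Y = Z ∘ₗ (((q : ℂ))⁻¹ • X - (c₀ : ℂ) • LinearMap.id))
    (hYh : Yh = -(Z' ∘ₗ ((q : ℂ) • X - (d₀ : ℂ) • LinearMap.id)))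
    (W : Submodule ℂ (LaurentPolynomial ℂ))
    (hW : W = Submodule.span ℂ {f : LaurentPolynomial ℂ | ∃ k : ℤ, k ≤ m₀ ∧ f = T k}) :
    ((∀ f ∈ W, X f ∈ W) ∧ (∀ f ∈ W, Y f ∈ W) ∧ (∀ f ∈ W, Yh f ∈ W)) ∧
    ({μ : ℂ | ∃ f ∈ W, f ≠ 0 ∧ X f = μ • f} =
      {μ : ℂ | ∃ m : ℕ, μ = ((c₀ * q ^ (2 * m + 1) : ℝ) : ℂ)}) ∧
    (∃ inner : LaurentPolynomial ℂ → LaurentPolynomial ℂ → ℂ,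
      (∀ f ∈ W, ∀ g ∈ W, inner f g = starRingEnd ℂ (inner g f)) ∧
      (∀ (a : ℂ), ∀ f ∈ W, ∀ g ∈ W, inner (a • f) g = a * inner f g) ∧
      (∀ f₁ ∈ W, ∀ f₂ ∈ W, ∀ g ∈ W, inner (f₁ + f₂) g = inner f₁ g + inner f₂ g) ∧
      (∀ f ∈ W, f ≠ 0 → 0 < (inner f f).re) ∧
      (∀ f ∈ W, ∀ g ∈ W, inner (X f) g = inner f (X g)) ∧
      (∀ f ∈ W, ∀ g ∈ W, inner (Y f) g = -inner f (Yh g))) :=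
  quantum_hyperboloid_discrete_series_general q hq0 hq1 c₀ d₀ hc hcd ν₀ m₀ hm X Z Z' Y Yh hX hZ hZ'
    hY hYh W hW
end
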